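/- The asynchronous rational group R is not finitely generated. -/

import Mathlib

/-- The Cantor space of infinite binary sequences. -/
abbrev Cantor : Type := ℕ → Bool

/-- Prepend a finite binary word to an infinite binary sequence. -/
def prepend (α : List Bool) (ψ : Cantor) : Cantor :=
  fun n => if h : n < α.length then α.get ⟨n, h⟩ else ψ (n - α.length)

/-- The basic clopen cone `I_α` of sequences beginning with the finite word `α`. -/
def cone (α : List Bool) : Set Cantor :=
  {ψ | ∀ i (h : i < α.length), ψ i = α.get ⟨i, h⟩}

/-- An asynchronous binary transducer with state set `S` (the initial state `s0`,
the transition function `t` and the output function `o`). -/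
structure Transducer (S : Type) where
  s0 : S
  t : S → Bool → S
  o : S → Bool → List Bool

/-- The extended transition function on finite binary words. -/
def Transducer.tStar {S : Type} (T : Transducer S) : S → List Bool → S
  | s, [] => s
  | s, b :: α => T.tStar (T.t s b) α

/-- The extended output function on finite binary words. -/
def Transducer.oStar {S : Type} (T : Transducer S) : S → List Bool → List Bool
  | _, [] => []
  | s, b :: α => T.o s b ++ T.oStar (T.t s b) α

/-- The length-`n` prefix of an infinite binary sequence, as a finite word. -/
def prefixWord (ψ : Cantor) (n : ℕ) : List Bool := (List.range n).map ψ

/-- `l` is a prefix of the infinite sequence `ψ`. -/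
def IsPrefixOf (l : List Bool) (ψ : Cantor) : Prop :=
  ∀ i (h : i < l.length), l.get ⟨i, h⟩ = ψ i

/-- The transducer `T` computes the map `f` on infinite binary sequences: on every input
`ψ` the finite outputs along the run are prefixes of `f ψ`, and their lengths tend to
infinity, so that the infinite concatenated output is exactly `f ψ`. -/
def Transducer.Computes {S : Type} (T : Transducer S) (f : Cantor → Cantor) : Prop :=
  ∀ ψ : Cantor, (∀ n, IsPrefixOf (T.oStar T.s0 (prefixWord ψ n)) (f ψ)) ∧
    (∀ k, ∃ n, k ≤ (T.oStar T.s0 (prefixWord ψ n)).length)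

/-- A homeomorphism of the Cantor space is rational if some asynchronous binary
transducer (with finitely many states) computes it. -/
def IsRational (f : Cantor ≃ₜ Cantor) : Prop :=
  ∃ (n : ℕ) (T : Transducer (Fin n)), T.Computes ⇑f

/-- `r` is the restriction `f|_α`: there is a finite word `β` (necessarily the longest
common prefix of `f(I_α)`) with `f(αω) = β · r(ω)` for all `ω`, where maximality of `β`
is expressed by saying that the outputs of `r` do not all share their first digit. -/
def IsRestrictionAt (f : Cantor ≃ₜ Cantor) (α : List Bool) (r : Cantor → Cantor) : Prop :=
  ∃ β : List Bool, (∀ ψ : Cantor, f (prepend α ψ) = prepend β (r ψ)) ∧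
    ∃ ψ ψ' : Cantor, r ψ 0 ≠ r ψ' 0

/-- The set of all restrictions of `f` as `α` ranges over finite binary words. -/
def restrictions (f : Cantor ≃ₜ Cantor) : Set (Cantor → Cantor) :=
  {r | ∃ α : List Bool, IsRestrictionAt f α r}

/-- `f` has finitely many distinct restrictions. -/
def FinitelyManyRestrictions (f : Cantor ≃ₜ Cantor) : Prop :=
  (restrictions f).Finite

/-- The group of self-homeomorphisms of the Cantor space, with `(f * g) x = f (g x)`. -/
instance : Group (Cantor ≃ₜ Cantor) where
  mul f g := g.trans f
  one := Homeomorph.refl _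
  inv := Homeomorph.symm
  mul_assoc _ _ _ := rfl
  one_mul _ := rfl
  mul_one _ := rfl
  inv_mul_cancel f := Homeomorph.ext fun x => f.symm_apply_apply x

/-- `k` is the homeomorphism `(f, g)`, acting as `f` on `I₀` and as `g` on `I₁`. -/
def IsPair (k f g : Cantor ≃ₜ Cantor) : Prop :=
  (∀ ζ : Cantor, k (prepend [false] ζ) = prepend [false] (f ζ)) ∧
  (∀ ζ : Cantor, k (prepend [true] ζ) = prepend [true] (g ζ))

/-- `x₀` is the first generator of Thompson's group `F`. -/
def IsX0 (x₀ : Cantor ≃ₜ Cantor) : Prop :=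
  (∀ ζ : Cantor, x₀ (prepend [false, false] ζ) = prepend [false] ζ) ∧
  (∀ ζ : Cantor, x₀ (prepend [false, true] ζ) = prepend [true, false] ζ) ∧
  (∀ ζ : Cantor, x₀ (prepend [true] ζ) = prepend [true, true] ζ)

/-- `f` has small support: it is the identity outside a proper nonempty clopen set. -/
def HasSmallSupport (f : Cantor ≃ₜ Cantor) : Prop :=
  ∃ E : Set Cantor, IsClopen E ∧ E.Nonempty ∧ E ≠ Set.univ ∧ ∀ ψ ∉ E, f ψ = ψ

/-- A group `G` of homeomorphisms of the Cantor space is full if every homeomorphism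
that locally agrees with `G` belongs to `G`. -/
def Full (G : Subgroup (Cantor ≃ₜ Cantor)) : Prop :=
  ∀ h : Cantor ≃ₜ Cantor,
    (∀ p : Cantor, ∃ U : Set Cantor, IsOpen U ∧ p ∈ U ∧ ∃ g ∈ G, ∀ x ∈ U, h x = g x) →
    h ∈ G

/-- A group `G` of homeomorphisms of the Cantor space is flexible if for all proper
nonempty clopen sets `E₁, E₂` there is `g ∈ G` with `g(E₁) ⊆ E₂`. -/
def Flexible (G : Subgroup (Cantor ≃ₜ Cantor)) : Prop :=
  ∀ E₁ E₂ : Set Cantor, IsClopen E₁ → E₁.Nonempty → E₁ ≠ Set.univ →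
    IsClopen E₂ → E₂.Nonempty → E₂ ≠ Set.univ →
    ∃ g ∈ G, ⇑g '' E₁ ⊆ E₂

/-- The map flipping every `p`-th binary digit (digits are indexed from 1, so the
digit at index `n : ℕ` is the `(n+1)`-st digit). -/
def flipFun (p : ℕ) (ψ : Cantor) : Cantor :=
  fun n => if p ∣ (n + 1) then !(ψ n) else ψ n

/-! A transducer with `n` states reading `A`, `A C`, `A C²`, … revisits a state after at most
`n` blocks, so on the inputs `A C^(i + e m) ζ` (with `1 ≤ e ≤ n`) its output has the shape
`A' C'^m Φ(ζ)`. Feeding this through a product of transducers, each with fewer than `p` states,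
the product sends `0^(k + d m) ψ` to `A C^m Φ(ψ)` for some `d` coprime to `p`. For the map
flipping every `p`-th digit such a shape forces `p ∣ d`. A finite generating set has a bound on
its state counts, so the flip for a larger prime is not a product of generators. -/

open List

lemma prepend_length_add (α : List Bool) (ψ : Cantor) (m : ℕ) :
    prepend α ψ (α.length + m) = ψ m := by
  simp [prepend]

lemma prefixWord_succ (ψ : Cantor) (n : ℕ) :
    prefixWord ψ (n + 1) = prefixWord ψ n ++ [ψ n] := by
  simp [prefixWord, List.range_succ]

lemma prefixWord_add (ψ : Cantor) (a b : ℕ) :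
    prefixWord ψ (a + b) = prefixWord ψ a ++ (List.range b).map (fun i => ψ (a + i)) := by
  simp [prefixWord, List.range_add, Function.comp_def]

lemma prefixWord_prepend (A : List Bool) (ζ : Cantor) (n : ℕ) :
    prefixWord (prepend A ζ) (A.length + n) = A ++ prefixWord ζ n := by
  induction n with
  | zero =>
    refine List.ext_getElem (by simp [prefixWord]) fun i _ h => ?_
    have hi : i < A.length := by simpa [prefixWord] using h
    simp [prefixWord, prepend, hi]
  | succ n ih =>
    rw [← add_assoc, prefixWord_succ, ih, prefixWord_succ, prepend_length_add, List.append_assoc]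

lemma isPrefixOf_prefixWord (ψ : Cantor) (n : ℕ) : IsPrefixOf (prefixWord ψ n) ψ := by
  simp [IsPrefixOf, prefixWord]

lemma IsPrefixOf.shift_of_append {B W : List Bool} {ψ : Cantor} (h : IsPrefixOf (B ++ W) ψ) :
    IsPrefixOf W (fun m => ψ (B.length + m)) := fun i hi => by
  simpa [List.getElem_append_right] using h (B.length + i) (by simp; omega)

lemma IsPrefixOf.eq_prepend {l : List Bool} {ψ : Cantor} (h : IsPrefixOf l ψ) :
    ψ = prepend l (fun m => ψ (l.length + m)) := by
  funext n
  by_cases hn : n < l.length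
  · simp [prepend, hn, ← h n hn]
  · simp [prepend, hn, Nat.add_sub_of_le (not_lt.1 hn)]

lemma eq_of_forall_isPrefixOf {W : ℕ → List Bool} {ψ ψ' : Cantor}
    (h : ∀ n, IsPrefixOf (W n) ψ) (h' : ∀ n, IsPrefixOf (W n) ψ')
    (hW : ∀ k, ∃ n, k ≤ (W n).length) : ψ = ψ' := by
  funext m
  obtain ⟨n, hn⟩ := hW (m + 1)
  rw [← h n m (by omega), h' n m (by omega)]

lemma flatten_replicate_add_mul (C : List Bool) (i e s : ℕ) :
    (replicate (i + e * s) C).flatten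
      = (replicate i C).flatten ++ (replicate s (replicate e C).flatten).flatten := by
  induction s with
  | zero => simp
  | succ s ih =>
    rw [Nat.mul_succ, ← add_assoc, replicate_add, flatten_append, ih, replicate_succ',
      flatten_append, flatten_singleton, List.append_assoc]

lemma exists_lt_le_card_map_eq {S : Type} [Fintype S] (u : ℕ → S) :
    ∃ i j, i < j ∧ j ≤ Fintype.card S ∧ u i = u j := by
  obtain ⟨x, y, hxy, hu⟩ := Fintype.exists_ne_map_eq_of_card_lt
    (fun x : Fin (Fintype.card S + 1) => u x) (by simp)
  rcases lt_or_gt_of_ne (Fin.val_ne_of_ne hxy) with h | h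
  · exact ⟨x, y, h, Nat.lt_succ_iff.1 y.2, hu⟩
  · exact ⟨y, x, h, Nat.lt_succ_iff.1 x.2, hu.symm⟩

namespace Transducer

variable {S : Type} (T : Transducer S)

lemma tStar_append (s : S) (X Y : List Bool) :
    T.tStar s (X ++ Y) = T.tStar (T.tStar s X) Y := by
  induction X generalizing s with
  | nil => rfl
  | cons b X ih => simp [tStar, ih]

lemma oStar_append (s : S) (X Y : List Bool) :
    T.oStar s (X ++ Y) = T.oStar s X ++ T.oStar (T.tStar s X) Y := by
  induction X generalizing s with
  | nil => rfl
  | cons b X ih => simp [oStar, tStar, ih]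

lemma length_oStar_prefixWord_mono (s : S) (ψ : Cantor) {n n' : ℕ} (h : n ≤ n') :
    (T.oStar s (prefixWord ψ n)).length ≤ (T.oStar s (prefixWord ψ n')).length := by
  obtain ⟨b, rfl⟩ := Nat.exists_eq_add_of_le h
  simp [prefixWord_add, oStar_append]

variable {T} {s : S} {W : List Bool}

lemma tStar_flatten_replicate_of_loop (h : T.tStar s W = s) (m : ℕ) :
    T.tStar s (replicate m W).flatten = s := by
  induction m with
  | zero => rfl
  | succ m ih => rw [replicate_succ', flatten_append, tStar_append, ih, flatten_singleton, h]

lemma oStar_flatten_replicate_of_loop (h : T.tStar s W = s) (m : ℕ) :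
    T.oStar s (replicate m W).flatten = (replicate m (T.oStar s W)).flatten := by
  induction m with
  | zero => rfl
  | succ m ih =>
    simp only [replicate_succ', flatten_append, oStar_append, ih,
      tStar_flatten_replicate_of_loop h, flatten_singleton]

namespace Computes

variable {f : Cantor → Cantor} (hT : T.Computes f)
include hT

lemma isPrefixOf_oStar_tail (A : List Bool) (ζ : Cantor) (n : ℕ) :
    IsPrefixOf (T.oStar (T.tStar T.s0 A) (prefixWord ζ n))
      (fun m => f (prepend A ζ) ((T.oStar T.s0 A).length + m)) := by
  have h := (hT (prepend A ζ)).1 (A.length + n)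
  rw [prefixWord_prepend, oStar_append] at h
  exact h.shift_of_append

lemma exists_le_length_oStar_tail (A : List Bool) (ζ : Cantor) (k : ℕ) :
    ∃ n, k ≤ (T.oStar (T.tStar T.s0 A) (prefixWord ζ n)).length := by
  obtain ⟨n, hn⟩ := (hT (prepend A ζ)).2 (k + (T.oStar T.s0 A).length)
  refine ⟨n, ?_⟩
  have h := T.length_oStar_prefixWord_mono T.s0 (prepend A ζ) (Nat.le_add_left n A.length)
  rw [prefixWord_prepend, oStar_append, length_append] at h
  omega

lemma exists_residual :
    ∃ R : S → Cantor → Cantor, ∀ A ζ,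
      f (prepend A ζ) = prepend (T.oStar T.s0 A) (R (T.tStar T.s0 A) ζ) := by
  classical
  -- `R s ζ` is the tail of the output on `A' ζ` for a chosen `A'` leading to `s`; by
  -- `eq_of_forall_isPrefixOf` any other such word gives the same tail.
  refine ⟨fun s ζ => if h : ∃ A, T.tStar T.s0 A = s then
    fun m => f (prepend h.choose ζ) ((T.oStar T.s0 h.choose).length + m) else ζ, fun A ζ => ?_⟩
  have hA : ∃ A', T.tStar T.s0 A' = T.tStar T.s0 A := ⟨A, rfl⟩
  dsimp only
  rw [dif_pos hA]
  have hprefix := (hT (prepend A ζ)).1 (A.length + 0)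
  rw [prefixWord_prepend, prefixWord, range_zero, map_nil, append_nil] at hprefix
  refine hprefix.eq_prepend.trans (congrArg _ (eq_of_forall_isPrefixOf
    (hT.isPrefixOf_oStar_tail A ζ) ?_ (hT.exists_le_length_oStar_tail A ζ)))
  simpa only [hA.choose_spec] using hT.isPrefixOf_oStar_tail hA.choose ζ

lemma exists_pumping [Fintype S] (A C : List Bool) :
    ∃ i e, 0 < e ∧ e ≤ Fintype.card S ∧ ∃ (A' C' : List Bool) (Φ : Cantor → Cantor),
      ∀ s ζ, f (prepend (A ++ (replicate (i + e * s) C).flatten) ζ)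
        = prepend (A' ++ (replicate s C').flatten) (Φ ζ) := by
  obtain ⟨R, hR⟩ := hT.exists_residual
  obtain ⟨i, j, hij, hj, hu⟩ :=
    exists_lt_le_card_map_eq fun m => T.tStar T.s0 (A ++ (replicate m C).flatten)
  obtain ⟨e, rfl⟩ := Nat.exists_eq_add_of_lt hij
  generalize hq : T.tStar T.s0 (A ++ (replicate i C).flatten) = q at hu
  have hloop : T.tStar q (replicate (e + 1) C).flatten = q := by
    rw [add_assoc, replicate_add, flatten_append, ← List.append_assoc, tStar_append, hq] at hu
    exact hu.symm
  refine ⟨i, e + 1, e.succ_pos, by omega, T.oStar T.s0 (A ++ (replicate i C).flatten),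
    T.oStar q (replicate (e + 1) C).flatten, R q, fun s ζ => ?_⟩
  rw [hR, flatten_replicate_add_mul, ← List.append_assoc, oStar_append, hq, tStar_append, hq,
    tStar_flatten_replicate_of_loop hloop, oStar_flatten_replicate_of_loop hloop]

end Computes

end Transducer

def PumpsZeros (g : Cantor → Cantor) (d : ℕ) : Prop :=
  ∃ (k : ℕ) (A C : List Bool) (Φ : Cantor → Cantor), ∀ m ψ,
    g (prepend (replicate (k + d * m) false) ψ) = prepend (A ++ (replicate m C).flatten) (Φ ψ)

lemma pumpsZeros_id : PumpsZeros id 1 :=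
  ⟨0, [], [false], id, fun m ψ => by simp [flatten_replicate_singleton]⟩

lemma PumpsZeros.comp {g f : Cantor → Cantor} {d : ℕ} (hg : PumpsZeros g d) {S : Type}
    [Fintype S] {T : Transducer S} (hT : T.Computes f) :
    ∃ e, 0 < e ∧ e ≤ Fintype.card S ∧ PumpsZeros (f ∘ g) (d * e) := by
  obtain ⟨k, A, C, Φ, hg⟩ := hg
  obtain ⟨i, e, he, heS, A', C', Φ', hf⟩ := hT.exists_pumping A C
  refine ⟨e, he, heS, k + d * i, A', C', Φ' ∘ Φ, fun s ψ => ?_⟩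
  rw [Function.comp_apply, show k + d * i + d * e * s = k + d * (i + e * s) by ring, hg, hf]
  rfl

lemma pumpsZeros_of_mem_closure {p : ℕ} (hp : p.Prime) {G : Set (Cantor ≃ₜ Cantor)}
    (hG : ∀ g ∈ G, ∃ n < p, ∃ T : Transducer (Fin n), T.Computes g) {g : Cantor ≃ₜ Cantor}
    (hg : g ∈ Submonoid.closure G) : ∃ d, d.Coprime p ∧ PumpsZeros g d := by
  induction hg using Submonoid.closure_induction_left with
  | one => exact ⟨1, Nat.coprime_one_left p, pumpsZeros_id⟩
  | mul_left x hx y _ ih =>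
    obtain ⟨n, hn, T, hT⟩ := hG x hx
    obtain ⟨d, hdp, hd⟩ := ih
    obtain ⟨e, he, hen, hde⟩ := hd.comp hT
    have hep : e.Coprime p :=
      (hp.coprime_iff_not_dvd.2 (Nat.not_dvd_of_pos_of_lt he
        ((hen.trans_eq (Fintype.card_fin n)).trans_lt hn))).symm
    exact ⟨d * e, hdp.mul_left hep, hde⟩

lemma flipFun_involutive (p : ℕ) : Function.Involutive (flipFun p) := fun ψ => by
  funext n
  by_cases h : p ∣ n + 1 <;> simp [flipFun, h]

lemma continuous_flipFun (p : ℕ) : Continuous (flipFun p) := by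
  refine continuous_pi fun n => ?_
  unfold flipFun
  split_ifs <;> fun_prop

def flipHomeo (p : ℕ) : Cantor ≃ₜ Cantor where
  toEquiv := (flipFun_involutive p).toPerm
  continuous_toFun := continuous_flipFun p
  continuous_invFun := continuous_flipFun p

def flipTransducer (p : ℕ) [NeZero p] : Transducer (Fin p) where
  s0 := 0
  t s _ := s + 1
  o s b := [if p ∣ s.val + 1 then !b else b]

lemma flipTransducer_tStar (p : ℕ) [NeZero p] (ψ : Cantor) (n : ℕ) :
    (flipTransducer p).tStar (flipTransducer p).s0 (prefixWord ψ n) = Fin.ofNat p n := by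
  induction n with
  | zero => rfl
  | succ n ih =>
    rw [prefixWord_succ, Transducer.tStar_append, ih]
    ext
    simp [flipTransducer, Transducer.tStar, Fin.val_add]

lemma flipTransducer_oStar (p : ℕ) [NeZero p] (ψ : Cantor) (n : ℕ) :
    (flipTransducer p).oStar (flipTransducer p).s0 (prefixWord ψ n)
      = prefixWord (flipFun p ψ) n := by
  induction n with
  | zero => rfl
  | succ n ih =>
    have hdvd : p ∣ n % p + 1 ↔ p ∣ n + 1 := by
      rw [Nat.dvd_iff_mod_eq_zero, Nat.mod_add_mod, ← Nat.dvd_iff_mod_eq_zero]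
    rw [prefixWord_succ, Transducer.oStar_append, ih, flipTransducer_tStar, prefixWord_succ]
    simp [flipTransducer, Transducer.oStar, flipFun, hdvd]

lemma isRational_flipHomeo {p : ℕ} (hp : p ≠ 0) : IsRational (flipHomeo p) := by
  have : NeZero p := ⟨hp⟩
  refine ⟨p, flipTransducer p, fun ψ => ⟨fun n => ?_, fun k => ⟨k, ?_⟩⟩⟩
  · rw [flipTransducer_oStar]
    exact isPrefixOf_prefixWord _ n
  · rw [flipTransducer_oStar]
    simp [prefixWord]

lemma flipFun_prepend_replicate {p K n : ℕ} (ψ : Cantor) (h : K ≤ n) :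
    flipFun p (prepend (replicate K false) ψ) n
      = if p ∣ n + 1 then !(ψ (n - K)) else ψ (n - K) := by
  simp [flipFun, prepend, not_lt.2 h]

lemma dvd_of_pumpsZeros_flipFun {p d : ℕ} (hp : 0 < p) (h : PumpsZeros (flipFun p) d) :
    p ∣ d := by
  obtain ⟨k, A, C, Φ, hΦ⟩ := h
  have key : ∀ ψ m, flipFun p (prepend (replicate k false) ψ) (A.length + m)
      = flipFun p (prepend (replicate (k + d) false) ψ) (A.length + C.length + m) := fun ψ m => by
    have h0 := congrFun (hΦ 0 ψ) (A.length + m)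
    have h1 := congrFun (hΦ 1 ψ) ((A ++ C).length + m)
    simp only [mul_zero, add_zero, mul_one, replicate_zero, replicate_one, flatten_nil,
      flatten_singleton, append_nil, prepend_length_add] at h0 h1
    rw [length_append] at h1
    exact h0.trans h1.symm
  set a := A.length
  set c := C.length
  -- At a position `a + m` where the flip acts, `ψ = 0` shows that it also acts at `a + c + m`,
  -- and a `ψ` with a single `true` then shows `c = d`.
  obtain ⟨M, hM⟩ : ∃ M, a + k + d < p * M := ⟨a + k + d + 1, by nlinarith⟩
  set m := p * M - (a + 1)
  have hm : p ∣ a + m + 1 := by rw [show a + m + 1 = p * M by omega]; exact dvd_mul_right p M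
  have hψ : ∀ ψ : Cantor, (!ψ (a + m - k))
      = if p ∣ a + c + m + 1 then !ψ (a + c + m - (k + d)) else ψ (a + c + m - (k + d)) :=
    fun ψ => by
      have h := key ψ m
      rwa [flipFun_prepend_replicate ψ (by omega), flipFun_prepend_replicate ψ (by omega),
        if_pos hm] at h
  have hc : p ∣ a + c + m + 1 := by
    by_contra h
    simpa [h] using hψ fun _ => false
  have hcd : c = d := by
    have h := hψ fun x => decide (x = a + m - k)
    simp only [hc, if_true, Bool.not_inj_iff, decide_true] at h
    have := of_decide_eq_true h.symm
    omega
  rw [← hcd]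
  refine (Nat.dvd_add_right hm).1 ?_
  rwa [show a + m + 1 + c = a + c + m + 1 by ring]

/-- the asynchronous rational group `R` is not finitely generated. -/
theorem rational_group_not_fg (R : Subgroup (Cantor ≃ₜ Cantor))
    (hR : ∀ f : Cantor ≃ₜ Cantor, f ∈ R ↔ IsRational f) :
    ¬ Group.FG ↥R := by
  intro hFG
  obtain ⟨S, hS⟩ := (Subgroup.fg_iff_submonoid_fg R).1 ((Group.fg_iff_subgroup_fg R).1 hFG)
  have hSR : ∀ g ∈ S, IsRational g := fun g hg =>
    (hR g).1 (by rw [← Subgroup.mem_toSubmonoid, ← hS]; exact Submonoid.subset_closure hg)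
  choose! ν T hT using hSR
  obtain ⟨p, hνp, hp⟩ := Nat.exists_infinite_primes (S.sup ν + 1)
  have hflip : flipHomeo p ∈ Submonoid.closure (S : Set (Cantor ≃ₜ Cantor)) :=
    hS ▸ (hR _).2 (isRational_flipHomeo hp.ne_zero)
  obtain ⟨d, hdp, hd⟩ := pumpsZeros_of_mem_closure hp (fun g hg =>
    ⟨ν g, (Finset.le_sup hg).trans_lt hνp, T g hg, hT g hg⟩) hflip
  exact hp.ne_one (hdp.symm.eq_one_of_dvd (dvd_of_pumpsZeros_flipFun hp.pos hd))
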